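/- arXiv:0811.1747 — 2 statements merged into one kernel-verified Lean document; each statement's English description precedes it below -/
import Mathlib

section
/- Let H : [t₀,ϑ₀]×ℝⁿ×ℝⁿ → ℝ satisfy conditions H1–H3 with constant Υ > 0. Define f : [t₀,ϑ₀]×ℝⁿ×(B×B)×(B×B) → ℝⁿ by f(t,x,(y,y'),(z,z')) = (H(t,x,z)+Υ(1+‖x‖))·z' + Υ(1+‖x‖)·y + Υ(1+‖x‖)(1+⟨y,z⟩)·y'. Then for every (t,x,s) ∈ [t₀,ϑ₀]×ℝⁿ×ℝⁿ one has H(t,x,s) = max_{(z,z')∈B×B} min_{(y,y')∈B×B} ⟨s, f(t,x,(y,y'),(z,z'))⟩, the maximum and minimum being attained. -/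
/-!
With `c = Υ (1 + ‖x‖)` and `h = H t x`, the payoff `⟪s, f⟫` equals
`(h z + c) ⟪s, z'⟫ + c ⟪s, y⟫ + c (1 + ⟪y, z⟫) ⟪s, y'⟫`, and `h` is positively homogeneous and
`c`-Lipschitz. The maximiser plays `z = z' = ŝ` (the unit vector along `s`): the payoff is then
`h s + c (1 + ⟪y, ŝ⟫) (‖s‖ + ⟪s, y'⟫) ≥ h s`, with equality at `y = -ŝ, y' = 0`. Against any
`(z, z')` the minimiser plays `y' = -ŝ` and `y = -ŵ` for `w = s - ‖s‖ z`, which brings the payoff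
down to `(h z + c) ⟪s, z'⟫ - c ‖s‖ - c ‖w‖ ≤ h (‖s‖ z) - c ‖s - ‖s‖ z‖ ≤ h s`.
-/

open Set Filter Metric
open scoped RealInnerProductSpace

noncomputable section

abbrev Eu (n : ℕ) := EuclideanSpace ℝ (Fin n)

/-- ω belongs to the class Ω: even, nonnegative, subadditive, and ω(δ) → 0 as δ → 0. -/
def MemOmega (ω : ℝ → ℝ) : Prop :=
  (∀ δ, 0 ≤ ω δ) ∧ (∀ δ, ω (-δ) = ω δ) ∧
  (∀ δ₁ δ₂, ω (δ₁ + δ₂) ≤ ω δ₁ + ω δ₂) ∧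
  Tendsto ω (nhds 0) (nhds 0)

/-- Conditions H1–H3 with constant Υ for a Hamiltonian H on [t₀,ϑ₀]×ℝⁿ×ℝⁿ. -/
def SatisfiesH (t₀ ϑ₀ : ℝ) (n : ℕ) (Υ : ℝ) (H : ℝ → Eu n → Eu n → ℝ) : Prop :=
  (∀ t ∈ Icc t₀ ϑ₀, ∀ x s : Eu n, |H t x s| ≤ Υ * ‖s‖ * (1 + ‖x‖)) ∧
  (∀ A : Set (Eu n), Bornology.IsBounded A →
    ∃ ωA : ℝ → ℝ, ∃ LA : ℝ, MemOmega ωA ∧ 0 < LA ∧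
      ∀ R : ℝ, 0 < R → ∀ t' ∈ Icc t₀ ϑ₀, ∀ t'' ∈ Icc t₀ ϑ₀,
        ∀ x' ∈ A, ∀ x'' ∈ A, ∀ s' s'' : Eu n, ‖s'‖ ≤ R → ‖s''‖ ≤ R →
          |H t' x' s' - H t'' x'' s''| ≤
            ωA (t' - t'') + LA * R * ‖x' - x''‖ +
              Υ * (1 + min ‖x'‖ ‖x''‖) * ‖s' - s''‖) ∧
  (∀ t ∈ Icc t₀ ϑ₀, ∀ x s : Eu n, ∀ α : ℝ, 0 ≤ α → H t x (α • s) = α * H t x s)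

open NormedSpace

section Normalize

variable {E : Type*} [NormedAddCommGroup E] [InnerProductSpace ℝ E]

lemma NormedSpace.norm_normalize_le_one (x : E) : ‖normalize x‖ ≤ 1 := by
  by_cases hx : x = 0
  · simp [hx]
  · exact (norm_normalize hx).le

lemma NormedSpace.real_inner_self_normalize (x : E) : ⟪x, normalize x⟫ = ‖x‖ := by
  by_cases hx : x = 0
  · simp [hx]
  · rw [normalize, real_inner_smul_right, real_inner_self_eq_norm_mul_norm]
    field_simp

end Normalize

lemma isGreatest_setOf_isLeast_image {α β : Type*} {φ : α → β → ℝ} {S : Set α} {T : Set β}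
    {a : ℝ} {u₀ : α} {v₀ : β} (hu₀ : u₀ ∈ S) (hv₀ : v₀ ∈ T) (hsaddle : φ u₀ v₀ = a)
    (hle : ∀ u ∈ S, a ≤ φ u v₀) (hge : ∀ v ∈ T, ∃ u ∈ S, φ u v ≤ a) :
    IsGreatest {r | ∃ v ∈ T, IsLeast ((φ · v) '' S) r} a := by
  refine ⟨⟨v₀, hv₀, ⟨u₀, hu₀, hsaddle⟩, ?_⟩, ?_⟩
  · rintro _ ⟨u, hu, rfl⟩
    exact hle u hu
  · rintro r ⟨v, hv, hr⟩
    obtain ⟨u, hu, hua⟩ := hge v hv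
    exact (hr.2 ⟨u, hu, rfl⟩).trans hua

section Dynamics

variable {E : Type*} [NormedAddCommGroup E] [InnerProductSpace ℝ E]

def IsPosHomogeneous (h : E → ℝ) : Prop :=
  ∀ z, ∀ α : ℝ, 0 ≤ α → h (α • z) = α * h z

lemma IsPosHomogeneous.map_zero {h : E → ℝ} (hom : IsPosHomogeneous h) : h 0 = 0 := by
  simpa using hom 0 0 le_rfl

lemma IsPosHomogeneous.eq_norm_mul_normalize {h : E → ℝ} (hom : IsPosHomogeneous h) (s : E) :
    h s = ‖s‖ * h (normalize s) := by
  conv_lhs => rw [← norm_smul_normalize s]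
  exact hom _ _ (norm_nonneg s)

/-- The dynamics `f` of the theorem, for `h = H t x` and `c = Υ (1 + ‖x‖)`; the first argument
is the minimiser's control `(y, y')`, the second the maximiser's `(z, z')`. -/
def explicitDynamics (h : E → ℝ) (c : ℝ) (u v : E × E) : E :=
  (h v.1 + c) • v.2 + c • u.1 + (c * (1 + ⟪u.1, v.1⟫)) • u.2

variable (h : E → ℝ) (c : ℝ)

lemma inner_explicitDynamics (s : E) (u v : E × E) :
    ⟪s, explicitDynamics h c u v⟫ =
      (h v.1 + c) * ⟪s, v.2⟫ + c * ⟪s, u.1⟫ + c * (1 + ⟪u.1, v.1⟫) * ⟪s, u.2⟫ := by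
  simp only [explicitDynamics, inner_add_right, real_inner_smul_right]

lemma continuous_inner_explicitDynamics (s : E) (v : E × E) :
    Continuous fun u => ⟪s, explicitDynamics h c u v⟫ := by
  simp only [inner_explicitDynamics]
  fun_prop

variable {h c}

lemma le_inner_explicitDynamics_normalize (hom : IsPosHomogeneous h) (hc : 0 ≤ c) (s : E)
    {y y' : E} (hy : ‖y‖ ≤ 1) (hy' : ‖y'‖ ≤ 1) :
    h s ≤ ⟪s, explicitDynamics h c (y, y') (normalize s, normalize s)⟫ := by
  have hsy : ⟪s, y⟫ = ‖s‖ * ⟪y, normalize s⟫ := by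
    conv_lhs => rw [← norm_smul_normalize s]
    rw [real_inner_smul_left, real_inner_comm]
  have hp : -1 ≤ ⟪y, normalize s⟫ := by
    have := neg_le_of_abs_le (abs_real_inner_le_norm y (normalize s))
    nlinarith [norm_normalize_le_one s, norm_nonneg y, norm_nonneg (normalize s)]
  have hq : -‖s‖ ≤ ⟪s, y'⟫ := by
    have := neg_le_of_abs_le (abs_real_inner_le_norm s y')
    nlinarith [norm_nonneg s]
  have hgap : 0 ≤ c * (1 + ⟪y, normalize s⟫) * (‖s‖ + ⟪s, y'⟫) :=
    mul_nonneg (mul_nonneg hc (by linarith)) (by linarith)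
  rw [inner_explicitDynamics, real_inner_self_normalize, hsy, hom.eq_norm_mul_normalize s]
  linarith

lemma inner_explicitDynamics_saddle (hom : IsPosHomogeneous h) (s : E) :
    ⟪s, explicitDynamics h c (-normalize s, 0) (normalize s, normalize s)⟫ = h s := by
  rw [inner_explicitDynamics, inner_neg_right, real_inner_self_normalize,
    hom.eq_norm_mul_normalize s]
  simp only [inner_zero_right, mul_zero, add_zero]
  ring

lemma inner_explicitDynamics_le (hom : IsPosHomogeneous h) (hc : 0 ≤ c)
    (hlip : ∀ a b, h a - h b ≤ c * ‖a - b‖) (s : E) {z z' : E} (hz : ‖z‖ ≤ 1)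
    (hz' : ‖z'‖ ≤ 1) :
    ⟪s, explicitDynamics h c (-normalize (s - ‖s‖ • z), -normalize s) (z, z')⟫ ≤ h s := by
  set w := s - ‖s‖ • z with hw
  have hsw : ⟪s, normalize w⟫ - ‖s‖ * ⟪normalize w, z⟫ = ‖w‖ := by
    rw [← real_inner_self_normalize w, hw, inner_sub_left, real_inner_smul_left,
      real_inner_comm z]
  have hzc : 0 ≤ h z + c := by
    have := hlip 0 z
    rw [hom.map_zero, zero_sub, zero_sub, norm_neg] at this
    nlinarith
  have hsz' : ⟪s, z'⟫ ≤ ‖s‖ := by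
    have := real_inner_le_norm s z'
    nlinarith [norm_nonneg s]
  have hshift : ‖s‖ * h z - h s ≤ c * ‖w‖ := by
    rw [← hom _ _ (norm_nonneg s), hw, norm_sub_rev]
    exact hlip _ _
  rw [inner_explicitDynamics]
  simp only [inner_neg_right, inner_neg_left, real_inner_self_normalize]
  nlinarith [mul_le_mul_of_nonneg_left hsz' hzc]

end Dynamics

lemma SatisfiesH.sub_le {t₀ ϑ₀ Υ : ℝ} {n : ℕ} {H : ℝ → Eu n → Eu n → ℝ}
    (hH : SatisfiesH t₀ ϑ₀ n Υ H) {t : ℝ} (ht : t ∈ Icc t₀ ϑ₀) (x a b : Eu n) :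
    H t x a - H t x b ≤ Υ * (1 + ‖x‖) * ‖a - b‖ := by
  obtain ⟨ω, L, hω, -, hreg⟩ := hH.2.1 {x} Bornology.isBounded_singleton
  have h := hreg (‖a‖ + ‖b‖ + 1) (by positivity) t ht t ht x rfl x rfl a b
    (by linarith [norm_nonneg b]) (by linarith [norm_nonneg a])
  rw [sub_self, eq_of_tendsto_nhds hω.2.2.2, sub_self, norm_zero, min_self] at h
  linarith [le_abs_self (H t x a - H t x b)]

theorem explicit_maxmin_representation_general
    (t₀ ϑ₀ : ℝ) (n : ℕ) (Υ : ℝ) (hΥ : 0 < Υ)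
    (H : ℝ → Eu n → Eu n → ℝ) (hH : SatisfiesH t₀ ϑ₀ n Υ H)
    (f : ℝ → Eu n → Eu n × Eu n → Eu n × Eu n → Eu n)
    (hf : ∀ (t : ℝ) (x y y' z z' : Eu n),
      f t x (y, y') (z, z') =
        (H t x z + Υ * (1 + ‖x‖)) • z' + (Υ * (1 + ‖x‖)) • y +
          (Υ * (1 + ‖x‖) * (1 + ⟪y, z⟫)) • y') :
    ∀ t ∈ Icc t₀ ϑ₀, ∀ x s : Eu n,
      (∀ v ∈ (closedBall (0 : Eu n) 1) ×ˢ (closedBall (0 : Eu n) 1),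
        ∃ r : ℝ, IsLeast ((fun u => ⟪s, f t x u v⟫) ''
          ((closedBall (0 : Eu n) 1) ×ˢ (closedBall (0 : Eu n) 1))) r) ∧
      IsGreatest {r : ℝ | ∃ v ∈ (closedBall (0 : Eu n) 1) ×ˢ (closedBall (0 : Eu n) 1),
        IsLeast ((fun u => ⟪s, f t x u v⟫) ''
          ((closedBall (0 : Eu n) 1) ×ˢ (closedBall (0 : Eu n) 1))) r} (H t x s) := by
  intro t ht x s
  have hc : 0 ≤ Υ * (1 + ‖x‖) := by positivity
  have hom : IsPosHomogeneous (H t x) := hH.2.2 t ht x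
  have hfx : f t x = explicitDynamics (H t x) (Υ * (1 + ‖x‖)) := by
    funext ⟨y, y'⟩ ⟨z, z'⟩
    exact hf t x y y' z z'
  have hball : ∀ {v : Eu n}, ‖v‖ ≤ 1 → v ∈ closedBall 0 1 := mem_closedBall_zero_iff.mpr
  rw [hfx]
  refine ⟨fun v _ => ?_, isGreatest_setOf_isLeast_image
    (u₀ := (-normalize s, 0)) (v₀ := (normalize s, normalize s)) ?_ ?_
    (inner_explicitDynamics_saddle hom s) ?_ ?_⟩
  · have hK := (isCompact_closedBall (0 : Eu n) 1).prod (isCompact_closedBall (0 : Eu n) 1)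
    exact (hK.image (continuous_inner_explicitDynamics _ _ s v)).exists_isLeast
      (((nonempty_closedBall.mpr zero_le_one).prod (nonempty_closedBall.mpr zero_le_one)).image _)
  · exact ⟨hball (by simpa using norm_normalize_le_one s), by simp⟩
  · exact ⟨hball (norm_normalize_le_one s), hball (norm_normalize_le_one s)⟩
  · rintro ⟨y, y'⟩ ⟨hy, hy'⟩
    exact le_inner_explicitDynamics_normalize hom hc s (mem_closedBall_zero_iff.mp hy)
      (mem_closedBall_zero_iff.mp hy')
  · rintro ⟨z, z'⟩ ⟨hz, hz'⟩
    exact ⟨_, ⟨hball (by simpa using norm_normalize_le_one _),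
      hball (by simpa using norm_normalize_le_one s)⟩,
      inner_explicitDynamics_le hom hc (hH.sub_le ht x) s (mem_closedBall_zero_iff.mp hz)
        (mem_closedBall_zero_iff.mp hz')⟩

/-- For a Hamiltonian H satisfying H1–H3 with constant Υ, the explicit dynamics
f(t,x,(y,y'),(z,z')) = (H(t,x,z)+Υ(1+‖x‖))·z' + Υ(1+‖x‖)·y + Υ(1+‖x‖)(1+⟨y,z⟩)·y'
on the unit ball B realizes H as the attained maxmin:
H(t,x,s) = max_{(z,z')∈B×B} min_{(y,y')∈B×B} ⟨s, f(t,x,(y,y'),(z,z'))⟩. -/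
theorem explicit_maxmin_representation
    (t₀ ϑ₀ : ℝ) (ht : t₀ < ϑ₀) (n : ℕ) (hn : 1 ≤ n) (Υ : ℝ) (hΥ : 0 < Υ)
    (H : ℝ → Eu n → Eu n → ℝ) (hH : SatisfiesH t₀ ϑ₀ n Υ H)
    (f : ℝ → Eu n → Eu n × Eu n → Eu n × Eu n → Eu n)
    (hf : ∀ (t : ℝ) (x y y' z z' : Eu n),
      f t x (y, y') (z, z') =
        (H t x z + Υ * (1 + ‖x‖)) • z' + (Υ * (1 + ‖x‖)) • y +
          (Υ * (1 + ‖x‖) * (1 + ⟪y, z⟫)) • y') :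
    ∀ t ∈ Icc t₀ ϑ₀, ∀ x s : Eu n,
      (∀ v ∈ (closedBall (0 : Eu n) 1) ×ˢ (closedBall (0 : Eu n) 1),
        ∃ r : ℝ, IsLeast ((fun u => ⟪s, f t x u v⟫) ''
          ((closedBall (0 : Eu n) 1) ×ˢ (closedBall (0 : Eu n) 1))) r) ∧
      IsGreatest {r : ℝ | ∃ v ∈ (closedBall (0 : Eu n) 1) ×ˢ (closedBall (0 : Eu n) 1),
        IsLeast ((fun u => ⟪s, f t x u v⟫) ''
          ((closedBall (0 : Eu n) 1) ×ˢ (closedBall (0 : Eu n) 1))) r} (H t x s) :=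
  explicit_maxmin_representation_general t₀ ϑ₀ n Υ hΥ H hH f hf
end
end

section
/- Let H : [t₀,ϑ₀]×ℝⁿ×ℝⁿ → ℝ satisfy conditions H1–H3 with constant Υ > 0. Then there exist a positive integer m, nonempty compact sets P, Q ⊆ ℝ^m, and a function f : [t₀,ϑ₀]×ℝⁿ×P×Q → ℝⁿ satisfying conditions F1–F3 such that for every (t,x,s) ∈ [t₀,ϑ₀]×ℝⁿ×ℝⁿ one has H(t,x,s) = min_{u∈P} max_{v∈Q} ⟨s, f(t,x,u,v)⟩ (in particular the indicated minima and maxima are attained). -/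
open Set Filter Metric
open scoped RealInnerProductSpace

noncomputable section

/-- Conditions F1–F3 for a game dynamics f on [t₀,ϑ₀]×ℝⁿ×P×Q. -/
def SatisfiesF (t₀ ϑ₀ : ℝ) (n m : ℕ) (P Q : Set (Eu m))
    (f : ℝ → Eu n → Eu m → Eu m → Eu n) : Prop :=
  ContinuousOn (fun p : ℝ × Eu n × Eu m × Eu m => f p.1 p.2.1 p.2.2.1 p.2.2.2)
    (Icc t₀ ϑ₀ ×ˢ (univ : Set (Eu n)) ×ˢ P ×ˢ Q) ∧
  (∀ A : Set (Eu n), Bornology.IsBounded A → ∃ K : ℝ, 0 < K ∧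
    ∀ t ∈ Icc t₀ ϑ₀, ∀ x' ∈ A, ∀ x'' ∈ A, ∀ u ∈ P, ∀ v ∈ Q,
      ‖f t x' u v - f t x'' u v‖ ≤ K * ‖x' - x''‖) ∧
  (∃ Λ : ℝ, 0 < Λ ∧ ∀ t ∈ Icc t₀ ϑ₀, ∀ x : Eu n, ∀ u ∈ P, ∀ v ∈ Q,
    ‖f t x u v‖ ≤ Λ * (1 + ‖x‖))

/-!
Fix `t, x` and put `λ = Υ (1 + ‖x‖)`; by H2 and H3, `h = H t x` is `λ`-Lipschitz and positively
homogeneous. For a unit vector `a` and `p = ⟪s, a⟫`,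
`h s ≤ h a * p + λ ‖s - p • a‖ + λ (‖s‖ - p)`: for `p ≥ 0` compare `s` with `p • a`, for `p < 0`
the last term alone dominates `h s ≤ λ ‖s‖`. Equality holds at `a = ‖s‖⁻¹ • s`. The right-hand
side is the maximum of `⟪s, h a • a + λ • (b - ⟪a, b⟫ • a + (b' - a))⟫` over `b, b'` in the unit
ball, so `H` is a minmax over `a` in the unit sphere and `(b, b')` in a product of balls,
both encoded in `ℝⁿ × ℝⁿ ≅ ℝ²ⁿ`.
-/

open Topology

section HomogeneousLipschitz

variable {E : Type*} [NormedAddCommGroup E] [InnerProductSpace ℝ E]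

theorem isGreatest_inner_closedBall (w : E) :
    IsGreatest ((fun b => ⟪w, b⟫) '' closedBall 0 1) ‖w‖ := by
  refine ⟨⟨‖w‖⁻¹ • w, ?_, ?_⟩, ?_⟩
  · rw [mem_closedBall_zero_iff, norm_smul, norm_inv, norm_norm]
    exact inv_mul_le_one_of_le₀ le_rfl (norm_nonneg w)
  · rcases eq_or_ne w 0 with rfl | hw
    · simp
    · simp only [real_inner_smul_right, real_inner_self_eq_norm_mul_norm]
      field_simp
  · rintro _ ⟨b, hb, rfl⟩
    rw [mem_closedBall_zero_iff] at hb
    calc ⟪w, b⟫ ≤ ‖w‖ * ‖b‖ := real_inner_le_norm w b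
      _ ≤ ‖w‖ := mul_le_of_le_one_right (norm_nonneg w) hb

def gameVelocity (c lam : ℝ) (a b b' : E) : E :=
  c • a + lam • (b - ⟪a, b⟫ • a + (b' - a))

theorem inner_gameVelocity (c lam : ℝ) (s a b b' : E) :
    ⟪s, gameVelocity c lam a b b'⟫ =
      c * ⟪s, a⟫ + lam * ⟪s - ⟪s, a⟫ • a, b⟫ + lam * (⟪s, b'⟫ - ⟪s, a⟫) := by
  simp only [gameVelocity, inner_add_right, inner_sub_right, inner_sub_left,
    real_inner_smul_right, real_inner_smul_left]
  ring

theorem isGreatest_inner_gameVelocity (c : ℝ) {lam : ℝ} (hlam : 0 ≤ lam) (s a : E) :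
    IsGreatest ((fun q : E × E => ⟪s, gameVelocity c lam a q.1 q.2⟫) ''
        closedBall 0 1 ×ˢ closedBall 0 1)
      (c * ⟪s, a⟫ + lam * ‖s - ⟪s, a⟫ • a‖ + lam * (‖s‖ - ⟪s, a⟫)) := by
  obtain ⟨⟨b, hb, hbw⟩, hmax⟩ := isGreatest_inner_closedBall (s - ⟪s, a⟫ • a)
  obtain ⟨⟨b', hb', hb's⟩, hmax'⟩ := isGreatest_inner_closedBall s
  refine ⟨⟨(b, b'), ⟨hb, hb'⟩, ?_⟩, ?_⟩
  · simp only [inner_gameVelocity, hbw, hb's]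
  · rintro _ ⟨⟨d, d'⟩, ⟨hd, hd'⟩, rfl⟩
    have hle := hmax ⟨d, hd, rfl⟩
    have hle' := hmax' ⟨d', hd', rfl⟩
    simp only [inner_gameVelocity]
    gcongr

theorem norm_gameVelocity_sub_le (c c' lam lam' : ℝ) {a b b' : E} (ha : ‖a‖ = 1)
    (hb : ‖b‖ ≤ 1) (hb' : ‖b'‖ ≤ 1) :
    ‖gameVelocity c lam a b b' - gameVelocity c' lam' a b b'‖ ≤ |c - c'| + 4 * |lam - lam'| := by
  have hab : |⟪a, b⟫| ≤ 1 := by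
    calc |⟪a, b⟫| ≤ ‖a‖ * ‖b‖ := abs_real_inner_le_norm a b
      _ ≤ 1 := by rw [ha, one_mul]; exact hb
  have hg : ‖b - ⟪a, b⟫ • a + (b' - a)‖ ≤ 4 := by
    calc ‖b - ⟪a, b⟫ • a + (b' - a)‖ ≤ ‖b‖ + |⟪a, b⟫| * ‖a‖ + (‖b'‖ + ‖a‖) := by
          refine (norm_add_le _ _).trans (add_le_add ((norm_sub_le _ _).trans ?_) (norm_sub_le _ _))
          rw [norm_smul, Real.norm_eq_abs]
      _ ≤ 4 := by rw [ha]; linarith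
  have hsub : gameVelocity c lam a b b' - gameVelocity c' lam' a b b'
      = (c - c') • a + (lam - lam') • (b - ⟪a, b⟫ • a + (b' - a)) := by
    simp only [gameVelocity]; module
  rw [hsub]
  calc _ ≤ |c - c'| * ‖a‖ + |lam - lam'| * ‖b - ⟪a, b⟫ • a + (b' - a)‖ := by
        simpa only [norm_smul, Real.norm_eq_abs] using
          norm_add_le ((c - c') • a) ((lam - lam') • (b - ⟪a, b⟫ • a + (b' - a)))
    _ ≤ |c - c'| + 4 * |lam - lam'| := by
        rw [ha, mul_one, mul_comm 4]; gcongr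

def upperValue (h : E → ℝ) (lam : ℝ) (s a : E) : ℝ :=
  h a * ⟪s, a⟫ + lam * ‖s - ⟪s, a⟫ • a‖ + lam * (‖s‖ - ⟪s, a⟫)

variable {h : E → ℝ} {lam : ℝ}

theorem map_zero_of_homogeneous (hhom : ∀ α : ℝ, 0 ≤ α → ∀ w, h (α • w) = α * h w) : h 0 = 0 := by
  simpa using hhom 0 le_rfl 0

theorem le_upperValue (hlam : 0 ≤ lam) (hlip : ∀ w w', h w - h w' ≤ lam * ‖w - w'‖)
    (hhom : ∀ α : ℝ, 0 ≤ α → ∀ w, h (α • w) = α * h w) (s : E) {a : E} (ha : ‖a‖ = 1) :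
    h s ≤ upperValue h lam s a := by
  have hsa : ⟪s, a⟫ ≤ ‖s‖ := by simpa [ha] using real_inner_le_norm s a
  have h0 := map_zero_of_homogeneous hhom
  unfold upperValue
  rcases le_or_gt 0 ⟪s, a⟫ with hp | hp
  · have hproj := hlip s (⟪s, a⟫ • a)
    rw [hhom _ hp] at hproj
    nlinarith [norm_nonneg (s - ⟪s, a⟫ • a)]
  · have hs : h s ≤ lam * ‖s‖ := by simpa [h0] using hlip s 0
    have ha' : h a ≤ lam := by simpa [h0, ha] using hlip a 0
    nlinarith [norm_nonneg (s - ⟪s, a⟫ • a)]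

theorem isLeast_upperValue [Nontrivial E] (hlam : 0 ≤ lam)
    (hlip : ∀ w w', h w - h w' ≤ lam * ‖w - w'‖)
    (hhom : ∀ α : ℝ, 0 ≤ α → ∀ w, h (α • w) = α * h w) (s : E) :
    IsLeast (upperValue h lam s '' sphere 0 1) (h s) := by
  refine ⟨?_, ?_⟩
  · rcases eq_or_ne s 0 with rfl | hs
    · obtain ⟨a, ha⟩ := (NormedSpace.sphere_nonempty (x := (0 : E))).mpr zero_le_one
      exact ⟨a, ha, by simp [upperValue, map_zero_of_homogeneous hhom]⟩
    · have hs' : ‖s‖ ≠ 0 := norm_ne_zero_iff.mpr hs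
      have hsa : ⟪s, ‖s‖⁻¹ • s⟫ = ‖s‖ := by
        rw [real_inner_smul_right, real_inner_self_eq_norm_mul_norm]; field_simp
      have hsmul : ‖s‖ • ‖s‖⁻¹ • s = s := by rw [smul_smul, mul_inv_cancel₀ hs', one_smul]
      refine ⟨‖s‖⁻¹ • s, by simp [norm_smul, hs'], ?_⟩
      rw [upperValue, hsa, hsmul, sub_self, norm_zero, sub_self, mul_comm, ← hhom _ (norm_nonneg s),
        hsmul]
      ring
  · rintro _ ⟨a, ha, rfl⟩
    exact le_upperValue hlam hlip hhom s (mem_sphere_zero_iff_norm.mp ha)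

end HomogeneousLipschitz

theorem MemOmega.apply_zero {ω : ℝ → ℝ} (hω : MemOmega ω) : ω 0 = 0 :=
  eq_of_tendsto_nhds hω.2.2.2

namespace SatisfiesH

variable {t₀ ϑ₀ Υ : ℝ} {n : ℕ} {H : ℝ → Eu n → Eu n → ℝ}

theorem sub_le_mul_norm_sub (hH : SatisfiesH t₀ ϑ₀ n Υ H) {t : ℝ} (ht : t ∈ Icc t₀ ϑ₀)
    (x s' s'' : Eu n) :
    H t x s' - H t x s'' ≤ Υ * (1 + ‖x‖) * ‖s' - s''‖ := by
  obtain ⟨ω, L, hω, -, hest⟩ := hH.2.1 {x} Bornology.isBounded_singleton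
  have := hest (‖s'‖ + ‖s''‖ + 1) (by positivity) t ht t ht x rfl x rfl s' s''
    (by linarith [norm_nonneg s'']) (by linarith [norm_nonneg s'])
  simp only [sub_self, hω.apply_zero, min_self, norm_zero, mul_zero, zero_add] at this
  exact (le_abs_self _).trans this

theorem exists_lipschitz_in_state (hH : SatisfiesH t₀ ϑ₀ n Υ H) {A : Set (Eu n)}
    (hA : Bornology.IsBounded A) :
    ∃ L : ℝ, 0 < L ∧ ∀ t ∈ Icc t₀ ϑ₀, ∀ x' ∈ A, ∀ x'' ∈ A, ∀ s : Eu n, ‖s‖ ≤ 1 →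
      |H t x' s - H t x'' s| ≤ L * ‖x' - x''‖ := by
  obtain ⟨ω, L, hω, hL, hest⟩ := hH.2.1 A hA
  refine ⟨L, hL, fun t ht x' hx' x'' hx'' s hs => ?_⟩
  simpa [hω.apply_zero] using hest 1 one_pos t ht t ht x' hx' x'' hx'' s s hs hs

theorem continuousOn (hΥ : 0 ≤ Υ) (hH : SatisfiesH t₀ ϑ₀ n Υ H) :
    ContinuousOn (fun p : ℝ × Eu n × Eu n => H p.1 p.2.1 p.2.2) (Icc t₀ ϑ₀ ×ˢ univ ×ˢ univ) := by
  rintro ⟨t, x, s⟩ ⟨ht, -, -⟩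
  obtain ⟨ω, L, hω, -, hest⟩ := hH.2.1 (closedBall x 1) isBounded_closedBall
  set R := ‖s‖ + 1
  set g : ℝ × Eu n × Eu n → ℝ := fun p =>
    ω (p.1 - t) + (L * R * ‖p.2.1 - x‖ + Υ * (1 + ‖x‖) * ‖p.2.2 - s‖)
  have hnear : ∀ᶠ p in 𝓝 (t, x, s), p.2.1 ∈ closedBall x 1 ∧ p.2.2 ∈ closedBall s 1 :=
    ((continuous_snd.fst.tendsto _).eventually_mem (closedBall_mem_nhds x one_pos)).and
      ((continuous_snd.snd.tendsto _).eventually_mem (closedBall_mem_nhds s one_pos))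
  have hbound : ∀ᶠ p in 𝓝[Icc t₀ ϑ₀ ×ˢ univ ×ˢ univ] (t, x, s),
      dist (H p.1 p.2.1 p.2.2) (H t x s) ≤ g p := by
    filter_upwards [self_mem_nhdsWithin, nhdsWithin_le_nhds hnear]
    rintro ⟨t', x', s'⟩ ⟨ht', -, -⟩ ⟨hx', hs'⟩
    have hs'R : ‖s'‖ ≤ R := by
      have := norm_le_norm_add_norm_sub' s' s
      rw [mem_closedBall, dist_eq_norm] at hs'
      linarith
    refine (hest R (by positivity) t' ht' t ht x' hx' x (mem_closedBall_self zero_le_one) s' s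
      hs'R (by linarith) : _).trans ?_
    have : Υ * (1 + min ‖x'‖ ‖x‖) ≤ Υ * (1 + ‖x‖) := by gcongr; exact min_le_right _ _
    simp only [g]
    nlinarith [norm_nonneg (s' - s)]
  have hg : Tendsto g (𝓝 (t, x, s)) (𝓝 0) := by
    have hω' : Tendsto (fun p : ℝ × Eu n × Eu n => ω (p.1 - t)) (𝓝 (t, x, s)) (𝓝 0) :=
      hω.2.2.2.comp ((continuous_fst.sub continuous_const).tendsto' _ _ (sub_self t))
    simpa using hω'.add ((by fun_prop : Continuous fun p : ℝ × Eu n × Eu n =>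
      L * R * ‖p.2.1 - x‖ + Υ * (1 + ‖x‖) * ‖p.2.2 - s‖).tendsto' _ _ (by simp))
  exact tendsto_iff_dist_tendsto_zero.2
    (squeeze_zero' (Eventually.of_forall fun _ => dist_nonneg) hbound
      (hg.mono_left nhdsWithin_le_nhds))

end SatisfiesH

section Game

variable {n : ℕ}

def splitEquiv (n : ℕ) : Eu (n + n) ≃L[ℝ] Eu n × Eu n := EuclideanSpace.finAddEquivProd

def directionControls (n : ℕ) : Set (Eu (n + n)) := (splitEquiv n).symm '' (sphere 0 1 ×ˢ {0})

def ballControls (n : ℕ) : Set (Eu (n + n)) :=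
  (splitEquiv n).symm '' (closedBall 0 1 ×ˢ closedBall 0 1)

def gameDynamics (Υ : ℝ) (H : ℝ → Eu n → Eu n → ℝ) (t : ℝ) (x : Eu n) (u v : Eu (n + n)) :
    Eu n :=
  gameVelocity (H t x (splitEquiv n u).1) (Υ * (1 + ‖x‖)) (splitEquiv n u).1
    (splitEquiv n v).1 (splitEquiv n v).2

theorem isCompact_directionControls (n : ℕ) : IsCompact (directionControls n) :=
  ((isCompact_sphere 0 1).prod isCompact_singleton).image (splitEquiv n).symm.continuous

theorem isCompact_ballControls (n : ℕ) : IsCompact (ballControls n) :=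
  ((isCompact_closedBall 0 1).prod (isCompact_closedBall 0 1)).image (splitEquiv n).symm.continuous

theorem directionControls_nonempty [Nontrivial (Eu n)] : (directionControls n).Nonempty :=
  ((NormedSpace.sphere_nonempty.mpr zero_le_one).prod (singleton_nonempty 0)).image _

theorem ballControls_nonempty : (ballControls n).Nonempty :=
  ((nonempty_closedBall.mpr zero_le_one).prod (nonempty_closedBall.mpr zero_le_one)).image _

variable {t₀ ϑ₀ Υ : ℝ} {H : ℝ → Eu n → Eu n → ℝ}

theorem satisfiesF_gameDynamics (hΥ : 0 < Υ) (hH : SatisfiesH t₀ ϑ₀ n Υ H) :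
    SatisfiesF t₀ ϑ₀ n (n + n) (directionControls n) (ballControls n) (gameDynamics Υ H) := by
  refine ⟨?_, fun A hA => ?_, ⟨5 * Υ, by positivity, ?_⟩⟩
  · have hHc : ContinuousOn
        (fun p : ℝ × Eu n × Eu (n + n) × Eu (n + n) => H p.1 p.2.1 (splitEquiv n p.2.2.1).1)
        (Icc t₀ ϑ₀ ×ˢ univ ×ˢ directionControls n ×ˢ ballControls n) :=
      (hH.continuousOn hΥ.le).comp
        (f := fun p : ℝ × Eu n × Eu (n + n) × Eu (n + n) => (p.1, p.2.1, (splitEquiv n p.2.2.1).1))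
        (by fun_prop) fun p hp => ⟨hp.1, trivial, trivial⟩
    simp only [gameDynamics, gameVelocity]
    exact (hHc.smul (by fun_prop : Continuous _).continuousOn).add
      (by fun_prop : Continuous _).continuousOn
  · obtain ⟨L, hL, hLip⟩ := hH.exists_lipschitz_in_state hA
    refine ⟨L + 4 * Υ, by positivity, ?_⟩
    rintro t ht x' hx' x'' hx'' _ ⟨⟨a, z⟩, ⟨ha, -⟩, rfl⟩ _ ⟨⟨b, b'⟩, ⟨hb, hb'⟩, rfl⟩
    rw [mem_sphere_zero_iff_norm] at ha
    rw [mem_closedBall_zero_iff] at hb hb'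
    have hx : |Υ * (1 + ‖x'‖) - Υ * (1 + ‖x''‖)| ≤ Υ * ‖x' - x''‖ := by
      rw [← mul_sub, abs_mul, abs_of_pos hΥ, add_sub_add_left_eq_sub]
      exact mul_le_mul_of_nonneg_left (abs_norm_sub_norm_le x' x'') hΥ.le
    simp only [gameDynamics, (splitEquiv n).apply_symm_apply]
    refine (norm_gameVelocity_sub_le _ _ _ _ ha hb hb').trans ?_
    linarith [hLip t ht x' hx' x'' hx'' a ha.le]
  · rintro t ht x _ ⟨⟨a, z⟩, ⟨ha, -⟩, rfl⟩ _ ⟨⟨b, b'⟩, ⟨hb, hb'⟩, rfl⟩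
    rw [mem_sphere_zero_iff_norm] at ha
    rw [mem_closedBall_zero_iff] at hb hb'
    have hHa : |H t x a| ≤ Υ * (1 + ‖x‖) := by simpa [ha] using hH.1 t ht x a
    have hzero : gameVelocity (0 : ℝ) 0 a b b' = 0 := by simp [gameVelocity]
    simp only [gameDynamics, (splitEquiv n).apply_symm_apply]
    have := norm_gameVelocity_sub_le (H t x a) 0 (Υ * (1 + ‖x‖)) 0 ha hb hb'
    rw [hzero, sub_zero, sub_zero, sub_zero, abs_of_nonneg (by positivity : 0 ≤ Υ * (1 + ‖x‖))]
      at this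
    linarith

theorem isGreatest_gameDynamics (hΥ : 0 ≤ Υ) (t : ℝ) (x s a : Eu n) :
    IsGreatest ((fun v => ⟪s, gameDynamics Υ H t x ((splitEquiv n).symm (a, 0)) v⟫) ''
      ballControls n) (upperValue (H t x) (Υ * (1 + ‖x‖)) s a) := by
  rw [ballControls, image_image]
  simp only [gameDynamics, (splitEquiv n).apply_symm_apply]
  exact isGreatest_inner_gameVelocity _ (by positivity) s a

theorem isLeast_gameDynamics [Nontrivial (Eu n)] (hΥ : 0 ≤ Υ) (hH : SatisfiesH t₀ ϑ₀ n Υ H)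
    {t : ℝ} (ht : t ∈ Icc t₀ ϑ₀) (x s : Eu n) :
    IsLeast {r : ℝ | ∃ u ∈ directionControls n,
      IsGreatest ((fun v => ⟪s, gameDynamics Υ H t x u v⟫) '' ballControls n) r} (H t x s) := by
  have hvalues : {r : ℝ | ∃ u ∈ directionControls n,
      IsGreatest ((fun v => ⟪s, gameDynamics Υ H t x u v⟫) '' ballControls n) r} =
        upperValue (H t x) (Υ * (1 + ‖x‖)) s '' sphere 0 1 := by
    ext r
    constructor
    · rintro ⟨_, ⟨⟨a, z⟩, ⟨ha, rfl⟩, rfl⟩, hr⟩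
      exact ⟨a, ha, (isGreatest_gameDynamics hΥ t x s a).unique hr⟩
    · rintro ⟨a, ha, rfl⟩
      exact ⟨_, ⟨(a, 0), ⟨ha, rfl⟩, rfl⟩, isGreatest_gameDynamics hΥ t x s a⟩
  rw [hvalues]
  exact isLeast_upperValue (by positivity) (hH.sub_le_mul_norm_sub ht x)
    (fun α hα w => hH.2.2 t ht x w α hα) s

end Game

theorem hamiltonian_is_minmax_general
    (t₀ ϑ₀ : ℝ) (n : ℕ) (hn : 1 ≤ n) (Υ : ℝ) (hΥ : 0 < Υ)
    (H : ℝ → Eu n → Eu n → ℝ) (hH : SatisfiesH t₀ ϑ₀ n Υ H) :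
    ∃ m : ℕ, 0 < m ∧ ∃ P Q : Set (Eu m), P.Nonempty ∧ Q.Nonempty ∧
      IsCompact P ∧ IsCompact Q ∧ ∃ f : ℝ → Eu n → Eu m → Eu m → Eu n,
        SatisfiesF t₀ ϑ₀ n m P Q f ∧
        ∀ t ∈ Icc t₀ ϑ₀, ∀ x s : Eu n,
          (∀ u ∈ P, ∃ r : ℝ, IsGreatest ((fun v => ⟪s, f t x u v⟫) '' Q) r) ∧
          IsLeast {r : ℝ | ∃ u ∈ P,
            IsGreatest ((fun v => ⟪s, f t x u v⟫) '' Q) r} (H t x s) := by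
  have : NeZero n := ⟨by omega⟩
  refine ⟨n + n, by omega, directionControls n, ballControls n, directionControls_nonempty,
    ballControls_nonempty, isCompact_directionControls n, isCompact_ballControls n,
    gameDynamics Υ H, satisfiesF_gameDynamics hΥ hH, fun t ht x s => ⟨?_, ?_⟩⟩
  · rintro _ ⟨⟨a, z⟩, ⟨-, rfl⟩, rfl⟩
    exact ⟨_, isGreatest_gameDynamics hΥ.le t x s a⟩
  · exact isLeast_gameDynamics hΥ.le hH ht x s

/-- Every Hamiltonian satisfying H1–H3 is the minmax Hamiltonian of some
differential game: there are compact control sets P, Q and a dynamics f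
satisfying F1–F3 with H(t,x,s) = min_{u ∈ P} max_{v ∈ Q} ⟨s, f(t,x,u,v)⟩,
the minima and maxima being attained. -/
theorem hamiltonian_is_minmax
    (t₀ ϑ₀ : ℝ) (ht : t₀ < ϑ₀) (n : ℕ) (hn : 1 ≤ n) (Υ : ℝ) (hΥ : 0 < Υ)
    (H : ℝ → Eu n → Eu n → ℝ) (hH : SatisfiesH t₀ ϑ₀ n Υ H) :
    ∃ m : ℕ, 0 < m ∧ ∃ P Q : Set (Eu m), P.Nonempty ∧ Q.Nonempty ∧
      IsCompact P ∧ IsCompact Q ∧ ∃ f : ℝ → Eu n → Eu m → Eu m → Eu n,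
        SatisfiesF t₀ ϑ₀ n m P Q f ∧
        ∀ t ∈ Icc t₀ ϑ₀, ∀ x s : Eu n,
          (∀ u ∈ P, ∃ r : ℝ, IsGreatest ((fun v => ⟪s, f t x u v⟫) '' Q) r) ∧
          IsLeast {r : ℝ | ∃ u ∈ P,
            IsGreatest ((fun v => ⟪s, f t x u v⟫) '' Q) r} (H t x s) :=
  hamiltonian_is_minmax_general t₀ ϑ₀ n hn Υ hΥ H hH
end
end
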